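/- Two-row hafnian expansion: for a symmetric 2n×2n matrix A over a commutative ring with zero diagonal and any two distinct indices i, j, hf(A) = a_{ij}·hf(A[i,j]) + Σ_{{p,q}: p,q ∉ {i,j}, p ≠ q} (a_{ip}a_{jq} + a_{iq}a_{jp})·hf(A[i,j,p,q]), where the sum is over unordered pairs {p,q}. -/

import Mathlib

/-!
Grouping the perfect matchings by the partner `p` of `i` gives the one-row expansion
`hf(A) = ∑_{p ≠ i} a_{ip} hf(A[i,p])`: matchings containing the edge `{i, p}` correspond to
matchings of the complement of `{i, p}`, enumerated increasingly, and symmetry of `A` makes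
the weight of that edge `a_{ip}` whichever of `i, p` is smaller. The term `p = j` is the first
summand of the theorem; for `p ≠ j`, expanding `hf(A[i,p])` along the row of `j` and merging
the terms of `(p, q)` and `(q, p)` gives the sum over unordered pairs.
-/

/-- The hafnian of a square matrix: the sum over all perfect matchings of the index
set (encoded as fixed-point-free involutions `σ`) of the product of the entries
`A i (σ i)` over the edges `{i, σ i}` of the matching (taking `i < σ i`). -/
def Matrix.hafnian {m : ℕ} {R : Type*} [CommRing R] (A : Matrix (Fin m) (Fin m) R) : R :=
  ∑ σ ∈ Finset.univ.filter (fun σ : Equiv.Perm (Fin m) => σ * σ = 1 ∧ ∀ i, σ i ≠ i),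
    ∏ i ∈ Finset.univ.filter (fun i => i < σ i), A i (σ i)

/-- The principal submatrix of `A` obtained by deleting the rows and columns indexed
by `s` (remaining indices kept in increasing order); junk value if the cardinality
does not match. -/
def Matrix.delPrincipal {m k : ℕ} {R : Type*} [CommRing R] (A : Matrix (Fin m) (Fin m) R)
    (s : Finset (Fin m)) : Matrix (Fin k) (Fin k) R :=
  if h : sᶜ.card = k then
    A.submatrix (fun a => (sᶜ.orderIsoOfFin h a : Fin m))
      (fun b => (sᶜ.orderIsoOfFin h b : Fin m))
  else 0

open Finset Equiv Matrix

namespace Finset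

variable {α M : Type*}

theorem exists_orderEmbOfFin_eq [LinearOrder α] {s : Finset α} {k : ℕ} (h : s.card = k)
    {x : α} (hx : x ∈ s) : ∃ b, s.orderEmbOfFin h b = x :=
  ⟨(s.orderIsoOfFin h).symm ⟨x, hx⟩, by simp [← coe_orderIsoOfFin_apply]⟩

theorem prod_orderEmbOfFin [LinearOrder α] [CommMonoid M] (s : Finset α) {k : ℕ}
    (h : s.card = k) (f : α → M) : ∏ b, f (s.orderEmbOfFin h b) = ∏ x ∈ s, f x :=
  ((s.orderIsoOfFin h).toEquiv.prod_comp (fun x => f x)).trans (s.prod_coe_sort f)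

theorem sum_offDiag_eq_sum_filter_lt [LinearOrder α] [AddCommMonoid M] (s : Finset α)
    (f : α → α → M) :
    ∑ x ∈ s.offDiag, f x.1 x.2 =
      ∑ x ∈ s.offDiag with x.1 < x.2, (f x.1 x.2 + f x.2 x.1) := by
  rw [sum_add_distrib, ← sum_filter_add_sum_filter_not s.offDiag (fun x => x.1 < x.2)]
  congr 1
  refine sum_nbij' Prod.swap Prod.swap ?_ ?_ (fun _ _ => rfl) (fun _ _ => rfl) (fun _ _ => rfl)
  · intro x hx
    simp only [mem_filter, mem_offDiag, Prod.fst_swap, Prod.snd_swap] at hx ⊢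
    exact ⟨⟨hx.1.2.1, hx.1.1, hx.1.2.2.symm⟩, lt_of_le_of_ne (not_lt.1 hx.2) hx.1.2.2.symm⟩
  · intro x hx
    simp only [mem_filter, mem_offDiag, Prod.fst_swap, Prod.snd_swap] at hx ⊢
    exact ⟨⟨hx.1.2.1, hx.1.1, hx.1.2.2.symm⟩, hx.2.not_gt⟩

end Finset

namespace Matrix

variable {R : Type*} [CommRing R] {m k l : ℕ}

theorem card_compl_pair {i j : Fin m} (hij : i ≠ j) (hk : k + 2 = m) :
    ({i, j}ᶜ : Finset (Fin m)).card = k := by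
  rw [card_compl, card_pair_eq_two_iff.2 hij, Fintype.card_fin]
  omega

theorem delPrincipal_eq_submatrix (A : Matrix (Fin m) (Fin m) R) {s : Finset (Fin m)}
    (hs : sᶜ.card = k) :
    A.delPrincipal (k := k) s = A.submatrix (sᶜ.orderEmbOfFin hs) (sᶜ.orderEmbOfFin hs) := by
  rw [delPrincipal, dif_pos hs]
  rfl

theorem delPrincipal_apply (A : Matrix (Fin m) (Fin m) R) {s : Finset (Fin m)}
    (hs : sᶜ.card = k) (a b : Fin k) :
    A.delPrincipal (k := k) s a b = A (sᶜ.orderEmbOfFin hs a) (sᶜ.orderEmbOfFin hs b) := by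
  rw [delPrincipal_eq_submatrix A hs, submatrix_apply]

theorem delPrincipal_delPrincipal (A : Matrix (Fin m) (Fin m) R) {s : Finset (Fin m)}
    (hs : sᶜ.card = k) {t : Finset (Fin k)} (ht : tᶜ.card = l) :
    (A.delPrincipal (k := k) s).delPrincipal (k := l) t =
      A.delPrincipal (k := l) (s ∪ t.map (sᶜ.orderEmbOfFin hs).toEmbedding) := by
  set e := sᶜ.orderEmbOfFin hs
  have hdisj : Disjoint s (t.map e.toEmbedding) := by
    refine disjoint_left.2 fun x hxs hxt => ?_
    obtain ⟨b, -, rfl⟩ := mem_map.1 hxt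
    exact mem_compl.1 (sᶜ.orderEmbOfFin_mem hs b) hxs
  have hst : (s ∪ t.map e.toEmbedding)ᶜ.card = l := by
    rw [card_compl, card_union_of_disjoint hdisj, card_map]
    rw [card_compl] at hs ht
    simp only [Fintype.card_fin] at hs ht ⊢
    omega
  have hcomp : (fun b => e (tᶜ.orderEmbOfFin ht b)) =
      (s ∪ t.map e.toEmbedding)ᶜ.orderEmbOfFin hst := by
    refine orderEmbOfFin_unique hst (fun b => ?_)
      (e.strictMono.comp (orderEmbOfFin _ _).strictMono)
    have hb := tᶜ.orderEmbOfFin_mem ht b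
    simp only [mem_compl, mem_union, mem_map, not_or, not_exists, not_and] at hb ⊢
    exact ⟨mem_compl.1 (sᶜ.orderEmbOfFin_mem hs _),
      fun c hc hce => hb (e.injective hce ▸ hc)⟩
  rw [delPrincipal_eq_submatrix _ hs, delPrincipal_eq_submatrix _ ht,
    delPrincipal_eq_submatrix _ hst, submatrix_submatrix, ← hcomp]
  rfl

def perfectMatchings (m : ℕ) : Finset (Perm (Fin m)) :=
  univ.filter fun σ => σ * σ = 1 ∧ ∀ i, σ i ≠ i

def matchingWeight (A : Matrix (Fin m) (Fin m) R) (σ : Perm (Fin m)) : R :=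
  ∏ a ∈ univ.filter (fun a => a < σ a), A a (σ a)

theorem hafnian_eq_sum_matchingWeight (A : Matrix (Fin m) (Fin m) R) :
    A.hafnian = ∑ σ ∈ perfectMatchings m, matchingWeight A σ :=
  rfl

theorem mem_perfectMatchings {σ : Perm (Fin m)} :
    σ ∈ perfectMatchings m ↔ (∀ x, σ (σ x) = x) ∧ ∀ x, σ x ≠ x := by
  simp [perfectMatchings, Perm.ext_iff]

theorem matchingWeight_eq_prod_ite (A : Matrix (Fin m) (Fin m) R) (σ : Perm (Fin m)) :
    matchingWeight A σ = ∏ a, if a < σ a then A a (σ a) else 1 :=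
  prod_filter _ _

section InsertEdge

variable {i j : Fin m} (hs : ({i, j}ᶜ : Finset (Fin m)).card = k)

def insertEdge (τ : Perm (Fin k)) : Perm (Fin m) :=
  Equiv.swap i j * τ.extendDomain (({i, j}ᶜ : Finset (Fin m)).orderIsoOfFin hs).toEquiv

variable (τ : Perm (Fin k))

theorem insertEdge_apply_left : insertEdge hs τ i = j := by
  rw [insertEdge, Perm.mul_apply, Perm.extendDomain_apply_not_subtype _ _ (by simp),
    swap_apply_left]

theorem insertEdge_apply_right : insertEdge hs τ j = i := by
  rw [insertEdge, Perm.mul_apply, Perm.extendDomain_apply_not_subtype _ _ (by simp),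
    swap_apply_right]

theorem insertEdge_apply_orderEmbOfFin (b : Fin k) :
    insertEdge hs τ (({i, j}ᶜ : Finset (Fin m)).orderEmbOfFin hs b) =
      ({i, j}ᶜ : Finset (Fin m)).orderEmbOfFin hs (τ b) := by
  have hmem := ({i, j}ᶜ : Finset (Fin m)).orderEmbOfFin_mem hs (τ b)
  simp only [mem_compl, mem_insert, mem_singleton, not_or] at hmem
  rw [insertEdge, Perm.mul_apply, ← coe_orderIsoOfFin_apply, ← coe_orderIsoOfFin_apply]
  rw [← coe_orderIsoOfFin_apply] at hmem
  exact (congrArg _ (Perm.extendDomain_apply_image _ _ b)).trans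
    (swap_apply_of_ne_of_ne hmem.1 hmem.2)

theorem eq_or_eq_or_exists_orderEmbOfFin_eq (x : Fin m) :
    x = i ∨ x = j ∨ ∃ b, ({i, j}ᶜ : Finset (Fin m)).orderEmbOfFin hs b = x := by
  by_cases hx : x ∈ ({i, j}ᶜ : Finset (Fin m))
  · exact Or.inr (Or.inr (exists_orderEmbOfFin_eq hs hx))
  · simp only [mem_compl, mem_insert, mem_singleton, not_or, not_and_or, not_not] at hx
    tauto

theorem insertEdge_mem_perfectMatchings_iff (hij : i ≠ j) :
    insertEdge hs τ ∈ perfectMatchings m ↔ τ ∈ perfectMatchings k := by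
  have he := (({i, j}ᶜ : Finset (Fin m)).orderEmbOfFin hs).injective
  simp only [mem_perfectMatchings]
  constructor
  · rintro ⟨hinv, hfix⟩
    refine ⟨fun b => he ?_, fun b hb => ?_⟩
    · simpa only [insertEdge_apply_orderEmbOfFin] using hinv (orderEmbOfFin _ hs b)
    · exact hfix (orderEmbOfFin _ hs b) (by rw [insertEdge_apply_orderEmbOfFin, hb])
  · rintro ⟨hinv, hfix⟩
    refine ⟨fun x => ?_, fun x => ?_⟩ <;>
      obtain rfl | rfl | ⟨b, rfl⟩ := eq_or_eq_or_exists_orderEmbOfFin_eq hs x <;>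
      simp only [insertEdge_apply_left, insertEdge_apply_right, insertEdge_apply_orderEmbOfFin,
        hinv, he.ne_iff, hfix, hij, hij.symm, ne_eq, not_false_eq_true]

theorem insertEdge_injective : Function.Injective (insertEdge hs) := fun τ τ' h =>
  Perm.ext fun b => (({i, j}ᶜ : Finset (Fin m)).orderEmbOfFin hs).injective <| by
    rw [← insertEdge_apply_orderEmbOfFin, h, insertEdge_apply_orderEmbOfFin]

theorem exists_insertEdge_eq {σ : Perm (Fin m)} (hσ : σ ∈ perfectMatchings m)
    (hσi : σ i = j) : ∃ τ, insertEdge hs τ = σ := by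
  have hσj : σ j = i := by rw [← hσi, (mem_perfectMatchings.1 hσ).1]
  have hcompl : ∀ x, σ x ∈ ({i, j}ᶜ : Finset (Fin m)) ↔ x ∈ ({i, j}ᶜ : Finset _) := by
    intro x
    simp only [mem_compl, mem_insert, mem_singleton, not_or]
    rw [← hσj, σ.injective.eq_iff, hσj, ← hσi, σ.injective.eq_iff, hσi, and_comm]
  set f := (({i, j}ᶜ : Finset (Fin m)).orderIsoOfFin hs).toEquiv
  refine ⟨f.symm.permCongr (σ.subtypePerm hcompl), Perm.ext fun x => ?_⟩
  obtain rfl | rfl | ⟨b, rfl⟩ := eq_or_eq_or_exists_orderEmbOfFin_eq hs x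
  · rw [insertEdge_apply_left, hσi]
  · rw [insertEdge_apply_right, hσj]
  · rw [insertEdge_apply_orderEmbOfFin, ← coe_orderIsoOfFin_apply, ← coe_orderIsoOfFin_apply]
    simp [f]

theorem matchingWeight_insertEdge {A : Matrix (Fin m) (Fin m) R} (hA : A.IsSymm)
    (hij : i ≠ j) : matchingWeight A (insertEdge hs τ) =
      A i j * matchingWeight (A.delPrincipal (k := k) {i, j}) τ := by
  rw [matchingWeight_eq_prod_ite, matchingWeight_eq_prod_ite, ← prod_mul_prod_compl {i, j},
    prod_pair hij, ← prod_orderEmbOfFin _ hs]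
  simp only [insertEdge_apply_left, insertEdge_apply_right, insertEdge_apply_orderEmbOfFin,
    OrderEmbedding.lt_iff_lt, delPrincipal_apply A hs]
  congr 1
  rcases hij.lt_or_gt with h | h
  · simp [h, h.not_gt]
  · simp [h, h.not_gt, hA.apply i j]

end InsertEdge

variable {A : Matrix (Fin m) (Fin m) R}

theorem sum_matchingWeight_filter_apply_eq (hA : A.IsSymm) {i j : Fin m} (hij : i ≠ j)
    (hs : ({i, j}ᶜ : Finset (Fin m)).card = k) :
    ∑ σ ∈ perfectMatchings m with σ i = j, matchingWeight A σ =
      A i j * (A.delPrincipal (k := k) {i, j}).hafnian := by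
  rw [hafnian_eq_sum_matchingWeight, mul_sum]
  symm
  refine sum_bij (fun τ _ => insertEdge hs τ) (fun τ hτ => ?_)
    (fun _ _ _ _ h => insertEdge_injective hs h) (fun σ hσ => ?_)
    (fun τ _ => (matchingWeight_insertEdge hs τ hA hij).symm)
  · exact mem_filter.2 ⟨(insertEdge_mem_perfectMatchings_iff hs τ hij).2 hτ,
      insertEdge_apply_left hs τ⟩
  · obtain ⟨hσ, hσi⟩ := mem_filter.1 hσ
    obtain ⟨τ, rfl⟩ := exists_insertEdge_eq hs hσ hσi
    exact ⟨τ, (insertEdge_mem_perfectMatchings_iff hs τ hij).1 hσ, rfl⟩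

theorem hafnian_eq_sum_mul_hafnian_delPrincipal (hA : A.IsSymm) (i : Fin m) (hk : k + 2 = m) :
    A.hafnian = ∑ p ∈ univ.erase i, A i p * (A.delPrincipal (k := k) {i, p}).hafnian := by
  rw [hafnian_eq_sum_matchingWeight, ← sum_fiberwise_of_maps_to (g := fun σ => σ i)
    (fun σ hσ => mem_erase.2 ⟨(mem_perfectMatchings.1 hσ).2 i, mem_univ _⟩)]
  exact sum_congr rfl fun p hp =>
    sum_matchingWeight_filter_apply_eq hA (ne_of_mem_erase hp).symm
      (card_compl_pair (ne_of_mem_erase hp).symm hk)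

theorem hafnian_delPrincipal_eq_sum (hA : A.IsSymm) {s : Finset (Fin m)} (hs : sᶜ.card = k)
    (hk : l + 2 = k) {j : Fin m} (hj : j ∉ s) :
    (A.delPrincipal (k := k) s).hafnian =
      ∑ q ∈ sᶜ.erase j, A j q * (A.delPrincipal (k := l) (s ∪ {j, q})).hafnian := by
  set e := sᶜ.orderEmbOfFin hs
  obtain ⟨j, rfl⟩ := exists_orderEmbOfFin_eq hs (mem_compl.2 hj)
  have hB : (A.delPrincipal (k := k) s).IsSymm := by
    rw [delPrincipal_eq_submatrix A hs]
    exact hA.submatrix _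
  have himage : (univ.erase j).map e.toEmbedding = sᶜ.erase (e j) := by
    rw [map_erase, map_orderEmbOfFin_univ]
    rfl
  rw [hafnian_eq_sum_mul_hafnian_delPrincipal hB j hk, ← himage, sum_map]
  refine sum_congr rfl fun q hq => ?_
  rw [delPrincipal_apply A hs, delPrincipal_delPrincipal A hs
    (card_compl_pair (ne_of_mem_erase hq).symm hk), map_insert, map_singleton]
  rfl

end Matrix

theorem hafnian_expand_two_rows_general {n : ℕ} {R : Type*} [CommRing R]
    (A : Matrix (Fin (2 * n + 2)) (Fin (2 * n + 2)) R)
    (hsymm : A.IsSymm)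
    (i j : Fin (2 * n + 2)) (hij : i ≠ j) :
    A.hafnian = A i j * (Matrix.delPrincipal (k := 2 * n) A {i, j}).hafnian +
      ∑ p ∈ Finset.univ.filter
          (fun p : Fin (2 * n + 2) × Fin (2 * n + 2) =>
            p.1 < p.2 ∧ p.1 ∉ ({i, j} : Finset (Fin (2 * n + 2))) ∧
              p.2 ∉ ({i, j} : Finset (Fin (2 * n + 2)))),
        (A i p.1 * A j p.2 + A i p.2 * A j p.1) *
          (Matrix.delPrincipal (k := 2 * n - 2) A {i, j, p.1, p.2}).hafnian := by
  have hj : j ∈ univ.erase i := mem_erase.2 ⟨hij.symm, mem_univ j⟩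
  have hcompl : (univ.erase i).erase j = {i, j}ᶜ := by ext; simp [and_comm]
  rw [hafnian_eq_sum_mul_hafnian_delPrincipal hsymm i rfl, ← add_sum_erase _ _ hj, hcompl]
  congr 1
  let g p q := A i p * A j q * (A.delPrincipal (k := 2 * n - 2) {i, j, p, q}).hafnian
  calc ∑ p ∈ {i, j}ᶜ, A i p * (A.delPrincipal (k := 2 * n) {i, p}).hafnian
      = ∑ p ∈ ({i, j}ᶜ : Finset _), ∑ q ∈ ({i, j}ᶜ : Finset _).erase p, g p q := by
        refine sum_congr rfl fun p hp => ?_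
        have hn : 2 * n - 2 + 2 = 2 * n := by
          have := card_pos.2 ⟨p, hp⟩
          rw [card_compl_pair hij rfl] at this
          omega
        obtain ⟨hpi, hpj⟩ : p ≠ i ∧ p ≠ j := by simpa using hp
        rw [hafnian_delPrincipal_eq_sum hsymm (card_compl_pair hpi.symm rfl) hn
          (j := j) (by simp [hij.symm, hpj.symm]), mul_sum]
        refine sum_congr (by ext; simp; tauto) fun q _ => ?_
        rw [show ({i, p} ∪ {j, q} : Finset _) = {i, j, p, q} by ext; simp; tauto]
        exact (mul_assoc _ _ _).symm
    _ = ∑ x ∈ ({i, j}ᶜ : Finset _).offDiag, g x.1 x.2 :=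
        (sum_finset_product' _ _ _ fun x => by simp [and_comm]; tauto).symm
    _ = ∑ x ∈ ({i, j}ᶜ : Finset _).offDiag with x.1 < x.2, (g x.1 x.2 + g x.2 x.1) :=
        sum_offDiag_eq_sum_filter_lt _ g
    _ = _ := by
        refine sum_congr (by ext; simp; grind) fun x _ => ?_
        simp only [g, pair_comm x.2 x.1]
        ring

/-- Two-row hafnian expansion: for a symmetric `2n × 2n` matrix `A` with zero
diagonal over a commutative ring and distinct indices `i ≠ j`,
`hf(A) = a_{ij}·hf(A[i,j]) + Σ_{{p,q} : p,q ∉ {i,j}, p ≠ q}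
(a_{ip}a_{jq} + a_{iq}a_{jp})·hf(A[i,j,p,q])`, the sum over unordered pairs `{p,q}`. -/
theorem hafnian_expand_two_rows {n : ℕ} {R : Type*} [CommRing R]
    (A : Matrix (Fin (2 * n + 2)) (Fin (2 * n + 2)) R)
    (hsymm : A.IsSymm) (hdiag : ∀ i, A i i = 0)
    (i j : Fin (2 * n + 2)) (hij : i ≠ j) :
    A.hafnian = A i j * (Matrix.delPrincipal (k := 2 * n) A {i, j}).hafnian +
      ∑ p ∈ Finset.univ.filter
          (fun p : Fin (2 * n + 2) × Fin (2 * n + 2) =>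
            p.1 < p.2 ∧ p.1 ∉ ({i, j} : Finset (Fin (2 * n + 2))) ∧
              p.2 ∉ ({i, j} : Finset (Fin (2 * n + 2)))),
        (A i p.1 * A j p.2 + A i p.2 * A j p.1) *
          (Matrix.delPrincipal (k := 2 * n - 2) A {i, j, p.1, p.2}).hafnian :=
  hafnian_expand_two_rows_general A hsymm i j hij
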